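/- Let f be the characteristic function of a non-degenerate real random variable X (i.e., X is not almost surely constant), so f(t) = E[exp(i t X)]. Then there exist positive constants α and β such that |f(t)| ≤ 1 − α t² for all real t with |t| ≤ β. -/

import Mathlib

open MeasureTheory Complex

/-!
If `X'` is an independent copy of `X`, then `|f t|² = E[cos (t (X - X'))]`. Non-degeneracy
says that `X - X'` is not almost surely `0`, so `|X - X'|` lies in some interval `[δ, L]`,
`δ > 0`, with positive probability `r`. For `|t| ≤ π / L` the bound
`1 - cos u ≥ 2 u² / π²` on `[-π, π]` gives `|f t|² ≤ 1 - (2 / π²) δ² r t²`, and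
`√(1 - s) ≤ 1 - s / 2` finishes.
-/

open Real in
lemma two_div_pi_sq_mul_sq_le_one_sub_cos {δ L t u : ℝ} (hδ : 0 ≤ δ) (hL : 0 < L)
    (ht : |t| ≤ π / L) (hu : |u| ∈ Set.Icc δ L) :
    2 / π ^ 2 * (δ ^ 2 * t ^ 2) ≤ 1 - Real.cos (t * u) := by
  have htu : |t * u| ≤ π := by
    rw [abs_mul]
    calc |t| * |u| ≤ π / L * L := mul_le_mul ht hu.2 (abs_nonneg u) (by positivity)
      _ = π := div_mul_cancel₀ π hL.ne'
  have hδu : δ ^ 2 * t ^ 2 ≤ (t * u) ^ 2 := by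
    rw [mul_pow, mul_comm, ← sq_abs u]
    gcongr
    exact hu.1
  have hcos := cos_le_one_sub_mul_cos_sq htu
  have hscaled : 2 / π ^ 2 * (δ ^ 2 * t ^ 2) ≤ 2 / π ^ 2 * (t * u) ^ 2 := by gcongr
  linarith

lemma le_one_sub_half_of_sq_le_one_sub {a s : ℝ} (h : a ^ 2 ≤ 1 - s) :
    a ≤ 1 - s / 2 := by
  nlinarith [sq_nonneg (a - 1 + s / 2), sq_nonneg s]

lemma sq_norm_charFun_eq_integral_cos (ν : Measure ℝ) [IsFiniteMeasure ν] (t : ℝ) :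
    ‖charFun ν t‖ ^ 2 = ∫ p, Real.cos (t * (p.1 - p.2)) ∂(ν.prod ν) := by
  have hprod : (‖charFun ν t‖ : ℂ) ^ 2
      = ∫ p, exp (↑(t * (p.1 - p.2)) * I) ∂(ν.prod ν) := by
    rw [← mul_conj', ← charFun_neg, charFun_apply_real, charFun_apply_real, ← integral_prod_mul]
    congr 1 with p
    rw [← Complex.exp_add]
    push_cast
    ring_nf
  have hint : Integrable (fun p : ℝ × ℝ ↦ exp (↑(t * (p.1 - p.2)) * I)) (ν.prod ν) :=
    (integrable_const (1 : ℝ)).mono (by fun_prop)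
      (ae_of_all _ fun p ↦ by rw [norm_exp_ofReal_mul_I, norm_one])
  rw [← ofReal_re (_ ^ 2), ofReal_pow, hprod, ← RCLike.re_to_complex, ← integral_re hint]
  simp_rw [RCLike.re_to_complex, exp_ofReal_mul_I_re]

lemma measure_prod_self_diagonal_compl_ne_zero {α : Type*} [MeasurableSpace α] [Nonempty α]
    {ν : Measure α} [SFinite ν] (hnd : ¬ ∃ c, ∀ᵐ x ∂ν, x = c) :
    ν.prod ν (Set.diagonal α)ᶜ ≠ 0 := by
  intro h0
  have hdiag : ∀ᵐ x ∂ν, ∀ᵐ y ∂ν, x = y := Measure.ae_ae_of_ae_prod (ae_iff.mpr h0)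
  rcases eq_zero_or_neZero ν with rfl | _
  · exact hnd ⟨Classical.arbitrary α, by simp⟩
  obtain ⟨c, hc⟩ := hdiag.exists
  exact hnd ⟨c, hc.mono fun y hy ↦ hy.symm⟩

lemma exists_measure_prod_self_abs_sub_mem_Icc_pos {ν : Measure ℝ} [SFinite ν]
    (hnd : ¬ ∃ c, ∀ᵐ x ∂ν, x = c) :
    ∃ δ > 0, ∃ L > 0, 0 < ν.prod ν {p | |p.1 - p.2| ∈ Set.Icc δ L} := by
  have hcover : (Set.diagonal ℝ)ᶜ
      ⊆ ⋃ n : ℕ, {p | |p.1 - p.2| ∈ Set.Icc (1 / (n + 1 : ℝ)) (n + 1)} := by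
    intro p hp
    have hpos : 0 < |p.1 - p.2| := abs_pos.mpr (sub_ne_zero.mpr hp)
    obtain ⟨m, hm⟩ := exists_nat_one_div_lt hpos
    obtain ⟨k, hk⟩ := exists_nat_ge |p.1 - p.2|
    refine Set.mem_iUnion.mpr ⟨max m k, hm.le.trans' ?_, hk.trans ?_⟩
    · gcongr; exact le_max_left m k
    · exact_mod_cast (le_max_right m k).trans (Nat.le_succ _)
  obtain ⟨n, hn⟩ :
      ∃ n : ℕ, ν.prod ν {p | |p.1 - p.2| ∈ Set.Icc (1 / (n + 1 : ℝ)) (n + 1)} ≠ 0 := by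
    by_contra! hzero
    exact measure_prod_self_diagonal_compl_ne_zero hnd
      (measure_mono_null hcover (measure_iUnion_null hzero))
  exact ⟨_, by positivity, _, by positivity, pos_iff_ne_zero.mpr hn⟩

open Real in
lemma sq_norm_charFun_le_one_sub {ν : Measure ℝ} [IsProbabilityMeasure ν] {δ L t : ℝ}
    (hδ : 0 ≤ δ) (hL : 0 < L) (ht : |t| ≤ π / L) :
    ‖charFun ν t‖ ^ 2
      ≤ 1 - 2 / π ^ 2 * δ ^ 2 * (ν.prod ν).real {p | |p.1 - p.2| ∈ Set.Icc δ L} * t ^ 2 := by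
  set S := {p : ℝ × ℝ | |p.1 - p.2| ∈ Set.Icc δ L}
  have hS : MeasurableSet S := by measurability
  have hcos : Integrable (fun p : ℝ × ℝ ↦ Real.cos (t * (p.1 - p.2))) (ν.prod ν) :=
    (integrable_const (1 : ℝ)).mono (by fun_prop) (ae_of_all _ fun p ↦ by
      simpa only [norm_eq_abs, norm_one] using abs_cos_le_one _)
  have hint : Integrable (fun p : ℝ × ℝ ↦ 1 - Real.cos (t * (p.1 - p.2))) (ν.prod ν) :=
    (integrable_const 1).sub hcos
  have hgap : 1 - ‖charFun ν t‖ ^ 2 = ∫ p, 1 - Real.cos (t * (p.1 - p.2)) ∂(ν.prod ν) := by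
    rw [integral_sub (integrable_const 1) hcos, sq_norm_charFun_eq_integral_cos]
    simp
  have hS_le : 2 / π ^ 2 * (δ ^ 2 * t ^ 2) * (ν.prod ν).real S
      ≤ ∫ p in S, 1 - Real.cos (t * (p.1 - p.2)) ∂(ν.prod ν) :=
    setIntegral_ge_of_const_le_real hS (measure_ne_top _ _)
      (fun p hp ↦ two_div_pi_sq_mul_sq_le_one_sub_cos hδ hL ht hp) hint.integrableOn
  have hS_tot : ∫ p in S, 1 - Real.cos (t * (p.1 - p.2)) ∂(ν.prod ν)
      ≤ ∫ p, 1 - Real.cos (t * (p.1 - p.2)) ∂(ν.prod ν) :=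
    setIntegral_le_integral hint (ae_of_all _ fun p ↦ sub_nonneg.mpr (cos_le_one _))
  linarith

/-- **Lin's theorem.** If `f` is the characteristic function of a non-degenerate
real random variable `X` (i.e. `X` is not almost surely constant), then there are
positive constants `α, β` such that `|f t| ≤ 1 - α * t ^ 2` whenever `|t| ≤ β`. -/
theorem charFun_le_one_sub_mul_sq
    {Ω : Type*} [MeasurableSpace Ω] (μ : Measure Ω) [IsProbabilityMeasure μ]
    (X : Ω → ℝ) (hX : Measurable X)
    (hnd : ¬ ∃ c : ℝ, ∀ᵐ ω ∂μ, X ω = c) :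
    ∃ α > (0 : ℝ), ∃ β > (0 : ℝ), ∀ t : ℝ, |t| ≤ β →
      ‖∫ ω, Complex.exp (Complex.I * t * X ω) ∂μ‖ ≤ 1 - α * t ^ 2 := by
  set ν := μ.map X
  have : IsProbabilityMeasure ν := Measure.isProbabilityMeasure_map hX.aemeasurable
  have hν : ¬ ∃ c, ∀ᵐ x ∂ν, x = c := fun ⟨c, hc⟩ ↦ hnd ⟨c, ae_of_ae_map hX.aemeasurable hc⟩
  obtain ⟨δ, hδ, L, hL, hS⟩ := exists_measure_prod_self_abs_sub_mem_Icc_pos hν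
  set r := (ν.prod ν).real {p | |p.1 - p.2| ∈ Set.Icc δ L}
  have hr : 0 < r := ENNReal.toReal_pos hS.ne' (measure_ne_top _ _)
  refine ⟨1 / Real.pi ^ 2 * δ ^ 2 * r, by positivity, Real.pi / L, by positivity, fun t ht ↦ ?_⟩
  have hcharFun : ∫ ω, exp (I * t * X ω) ∂μ = charFun ν t := by
    rw [charFun_apply_real, integral_map hX.aemeasurable (by fun_prop)]
    simp_rw [mul_comm I, mul_right_comm]
  rw [hcharFun]
  convert le_one_sub_half_of_sq_le_one_sub (sq_norm_charFun_le_one_sub (ν := ν) hδ.le hL ht)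
    using 2
  ring
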